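/- arXiv:0901.1918 — 2 statements merged into one kernel-verified Lean document; each statement's English description precedes it below -/
import Mathlib

section
/- Let q ∈ (−1,0). Then F_q(t) ≥ 0 for every t ∈ ℝ. -/
/-- `c q r` for `r ≥ 1`: the Fourier coefficient `q^(r-1)(1+q)^2/((1+q^(r+1))(1+q^(r-1)))`. -/
noncomputable def circCoeff (q : ℝ) (r : ℕ) : ℝ :=
  q ^ (r - 1) * (1 + q) ^ 2 / ((1 + q ^ (r + 1)) * (1 + q ^ (r - 1)))

/-- The circular density `F_q(t) = 1 + 2 ∑_{r≥1} (-1)^r c_r(q) cos(2rt)`. -/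
noncomputable def circDensity (q : ℝ) (t : ℝ) : ℝ :=
  1 + 2 * ∑' r : ℕ, (-1 : ℝ) ^ (r + 1) * circCoeff q (r + 1) * Real.cos (2 * (r + 1) * t)

/-!
For `q < 0` the sign of `c_r(q)` is `(-1)^(r-1)`, so `∑ |c_r(q)| = ∑_r (-1)^r c_{r+1}(q)`. Since
`c_{r+1}(q) = (1+q)/(q-1) · (a_r - a_{r+2})` with `a_n = (1+q^n)⁻¹`, this alternating series
telescopes to `(1+q)/(q-1) · (a_0 - a_1) = 1/2`. Hence the cosine series is bounded by `1/2` in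
absolute value and `F_q ≥ 1 - 2 · 1/2 = 0`.
-/

open Filter Topology Finset

theorem sum_range_neg_one_pow_mul_sub_add_two (a : ℕ → ℝ) (N : ℕ) :
    ∑ r ∈ range N, (-1) ^ r * (a r - a (r + 2)) =
      (a 0 - a 1) - (-1) ^ N * (a N - a (N + 1)) := by
  let d : ℕ → ℝ := fun n => (-1) ^ n * (a n - a (n + 1))
  have hstep : ∀ r, (-1) ^ r * (a r - a (r + 2)) = d r - d (r + 1) := fun r => by
    simp only [d, pow_succ]
    ring
  simp only [hstep, sum_range_sub', d]
  ring

theorem tendsto_sum_range_neg_one_pow_mul_sub_add_two {a : ℕ → ℝ} {L : ℝ}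
    (ha : Tendsto a atTop (𝓝 L)) :
    Tendsto (fun N => ∑ r ∈ range N, (-1) ^ r * (a r - a (r + 2))) atTop (𝓝 (a 0 - a 1)) := by
  have hdiff : Tendsto (fun n => a n - a (n + 1)) atTop (𝓝 0) := by
    simpa using ha.sub (ha.comp (tendsto_add_atTop_nat 1))
  have hboundary : Tendsto (fun n => (-1 : ℝ) ^ n * (a n - a (n + 1))) atTop (𝓝 0) := by
    rw [tendsto_zero_iff_norm_tendsto_zero] at hdiff ⊢
    simpa [norm_mul] using hdiff
  simp only [sum_range_neg_one_pow_mul_sub_add_two]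
  simpa using tendsto_const_nhds.sub hboundary

section CircCoeff

variable {q : ℝ}

theorem one_add_pow_pos (hq : |q| < 1) (s : ℕ) : 0 < 1 + q ^ s := by
  rcases s.eq_zero_or_pos with rfl | hs
  · norm_num
  · have : |q ^ s| < 1 := by
      rw [abs_pow]
      exact pow_lt_one₀ (abs_nonneg q) hq hs.ne'
    linarith [(abs_lt.1 this).1]

theorem abs_lt_one_of_mem_Ioc (hq : q ∈ Set.Ioc (-1) 0) : |q| < 1 :=
  abs_lt.2 ⟨hq.1, by linarith [hq.2]⟩

theorem circCoeff_succ_eq (hq : |q| < 1) (r : ℕ) :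
    circCoeff q (r + 1) = (1 + q) / (q - 1) * ((1 + q ^ r)⁻¹ - (1 + q ^ (r + 2))⁻¹) := by
  have hq1 : q - 1 ≠ 0 := by linarith [(abs_lt.1 hq).2]
  have hr := (one_add_pow_pos hq r).ne'
  have hr2 := (one_add_pow_pos hq (r + 2)).ne'
  rw [circCoeff, Nat.add_sub_cancel, show r + 1 + 1 = r + 2 by rfl]
  field_simp
  ring

theorem tendsto_sum_range_alternating_circCoeff (hq : |q| < 1) :
    Tendsto (fun N => ∑ r ∈ range N, (-1) ^ r * circCoeff q (r + 1)) atTop (𝓝 (1 / 2)) := by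
  let a : ℕ → ℝ := fun n => (1 + q ^ n)⁻¹
  have ha : Tendsto a atTop (𝓝 1) := by
    simpa [a] using
      (tendsto_const_nhds.add (tendsto_pow_atTop_nhds_zero_of_abs_lt_one hq)).inv₀
        (by norm_num : (1 : ℝ) + 0 ≠ 0)
  have hsum : ∀ N, ∑ r ∈ range N, (-1) ^ r * circCoeff q (r + 1) =
      (1 + q) / (q - 1) * ∑ r ∈ range N, (-1) ^ r * (a r - a (r + 2)) := fun N => by
    rw [mul_sum]
    exact sum_congr rfl fun r _ => by rw [circCoeff_succ_eq hq]; ring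
  have hlimit : (1 + q) / (q - 1) * (a 0 - a 1) = 1 / 2 := by
    have hq1 : q - 1 ≠ 0 := by linarith [(abs_lt.1 hq).2]
    have hq0 := (one_add_pow_pos hq 1).ne'
    simp only [a, pow_zero, pow_one] at hq0 ⊢
    field_simp
    ring
  simp only [hsum]
  rw [← hlimit]
  exact (tendsto_sum_range_neg_one_pow_mul_sub_add_two ha).const_mul _

theorem alternating_circCoeff_nonneg (hq : q ∈ Set.Ioc (-1) 0) (r : ℕ) :
    0 ≤ (-1) ^ r * circCoeff q (r + 1) := by
  have hq' := abs_lt_one_of_mem_Ioc hq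
  rw [circCoeff, Nat.add_sub_cancel, ← mul_div_assoc, ← mul_assoc, ← mul_pow, neg_one_mul]
  have := neg_nonneg.2 hq.2
  have := one_add_pow_pos hq' r
  have := one_add_pow_pos hq' (r + 1 + 1)
  positivity

theorem hasSum_alternating_circCoeff (hq : q ∈ Set.Ioc (-1) 0) :
    HasSum (fun r => (-1) ^ r * circCoeff q (r + 1)) (1 / 2) :=
  (hasSum_iff_tendsto_nat_of_nonneg (alternating_circCoeff_nonneg hq) _).2
    (tendsto_sum_range_alternating_circCoeff (abs_lt_one_of_mem_Ioc hq))

end CircCoeff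

theorem stmt5 (q : ℝ) (hq : q ∈ Set.Ioo (-1 : ℝ) 0) :
    ∀ t : ℝ, 0 ≤ circDensity q t := by
  intro t
  have hq' : q ∈ Set.Ioc (-1) 0 := Set.Ioo_subset_Ioc_self hq
  have hbound : ‖∑' r : ℕ, (-1 : ℝ) ^ (r + 1) * circCoeff q (r + 1) *
      Real.cos (2 * (r + 1) * t)‖ ≤ 1 / 2 := by
    refine tsum_of_norm_bounded (hasSum_alternating_circCoeff hq') fun r => ?_
    rw [pow_succ, mul_neg_one, neg_mul, neg_mul, norm_neg, norm_mul, Real.norm_eq_abs,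
      abs_of_nonneg (alternating_circCoeff_nonneg hq' r)]
    exact mul_le_of_le_one_right (alternating_circCoeff_nonneg hq' r) (Real.abs_cos_le_one _)
  rw [Real.norm_eq_abs, abs_le] at hbound
  rw [circDensity]
  linarith [hbound.1]
end

section
/- Let q ∈ (−1,0) and let k ≥ 0 be an integer. Then (1/2π) ∫_0^{2π} F_q(t) (2cos t)^{2k} dt = C(2k,k) + 2 ∑_{r=1}^k (−1)^r C(2k, k−r) c_r(q), where C(m,j) is the binomial coefficient. (This corrects a misprint in the paper, where the factor 2 in front of the sum is omitted.) -/
open Finset Real Complex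

open MeasureTheory in
theorem hasSum_intervalIntegral_of_norm_le {ι E : Type*} [Countable ι] [NormedAddCommGroup E]
    [NormedSpace ℝ E] {F : ι → ℝ → E} {f : ℝ → E} {u : ι → ℝ} (hF : ∀ i, Continuous (F i))
    (hu : Summable u) (hFu : ∀ i t, ‖F i t‖ ≤ u i) (hf : ∀ t, HasSum (F · t) (f t)) (a b : ℝ) :
    HasSum (fun i => ∫ t in a..b, F i t) (∫ t in a..b, f t) :=
  intervalIntegral.hasSum_integral_of_dominated_convergence (fun i _ => u i)
    (fun i => (hF i).aestronglyMeasurable) (fun i => ae_of_all _ fun t _ => hFu i t)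
    (ae_of_all _ fun _ _ => hu) intervalIntegrable_const (ae_of_all _ fun t _ => hf t)

theorem integral_cexp_int_mul_mul_I (n : ℤ) :
    ∫ t in (0 : ℝ)..2 * π, cexp (n * t * I) = if n = 0 then 2 * π else 0 := by
  split_ifs with hn
  · simp [hn]
  · have hnI : (n : ℂ) * I ≠ 0 := by simp [hn]
    have hperiod : cexp (n * I * (2 * π)) = 1 := by
      rw [← exp_int_mul_two_pi_mul_I n]; ring_nf
    simp_rw [mul_right_comm _ _ I]
    simp [integral_exp_mul_complex hnI, hperiod]

theorem two_cos_pow_eq_sum (n : ℕ) (t : ℝ) :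
    (2 * Complex.cos t) ^ n =
      ∑ j ∈ range (n + 1), (n.choose j : ℂ) * cexp ((2 * j - n : ℤ) * t * I) := by
  rw [two_cos, add_pow]
  refine sum_congr rfl fun j hj => ?_
  have hjn : j ≤ n := Nat.lt_succ_iff.mp (mem_range.mp hj)
  rw [← Complex.exp_nat_mul, ← Complex.exp_nat_mul, ← Complex.exp_add, mul_comm]
  push_cast [Nat.cast_sub hjn]
  ring_nf

theorem integral_cexp_mul_two_cos_pow (m : ℤ) (n : ℕ) :
    ∫ t in (0 : ℝ)..2 * π, cexp (m * t * I) * (2 * Complex.cos t) ^ n =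
      2 * π * ∑ j ∈ range (n + 1), if m + (2 * j - n) = 0 then (n.choose j : ℂ) else 0 := by
  simp_rw [two_cos_pow_eq_sum, mul_sum, mul_left_comm (cexp _), ← Complex.exp_add, ← add_mul,
    ← Int.cast_add]
  rw [intervalIntegral.integral_finsetSum fun j _ =>
    (by fun_prop : Continuous _).intervalIntegrable _ _]
  refine sum_congr rfl fun j _ => ?_
  rw [intervalIntegral.integral_const_mul, integral_cexp_int_mul_mul_I]
  split_ifs <;> push_cast <;> ring

theorem integral_cos_mul_two_cos_pow (r k : ℕ) :
    ∫ t in (0 : ℝ)..2 * π, Real.cos (2 * r * t) * (2 * Real.cos t) ^ (2 * k) =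
      if r ≤ k then 2 * π * (2 * k).choose (k - r) else 0 := by
  have hre : ∀ t : ℝ, Real.cos (2 * r * t) * (2 * Real.cos t) ^ (2 * k) =
      RCLike.re (cexp ((2 * r : ℤ) * t * I) * (2 * Complex.cos t) ^ (2 * k)) := by
    intro t
    rw [← Complex.ofReal_cos, ← Complex.ofReal_ofNat, ← Complex.ofReal_mul,
      ← Complex.ofReal_pow, RCLike.re_to_complex, Complex.re_mul_ofReal]
    push_cast
    rw [← Complex.ofReal_natCast, ← Complex.ofReal_ofNat, ← Complex.ofReal_mul,
      ← Complex.ofReal_mul, Complex.exp_ofReal_mul_I_re]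
  have hsum : ∑ j ∈ range (2 * k + 1),
      (if (2 * r : ℤ) + (2 * j - (2 * k : ℕ)) = 0 then ((2 * k).choose j : ℂ) else 0) =
      if r ≤ k then ((2 * k).choose (k - r) : ℂ) else 0 := by
    split_ifs with hrk
    · rw [sum_eq_single (k - r) (fun j _ hj => if_neg (by omega)) (fun h => by
        simp only [mem_range] at h; omega), if_pos (by omega)]
    · exact sum_eq_zero fun j _ => if_neg (by omega)
  simp_rw [hre]
  rw [intervalIntegral.intervalIntegral_re ((by fun_prop : Continuous _).intervalIntegrable _ _),
    integral_cexp_mul_two_cos_pow, hsum]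
  split_ifs <;> simp

theorem self_le_pow_of_neg_one_le_of_nonpos {q : ℝ} (h₁ : -1 ≤ q) (h₀ : q ≤ 0) (s : ℕ) :
    q ≤ q ^ s := by
  rcases Nat.eq_zero_or_pos s with rfl | hs
  · simp only [pow_zero]; linarith
  · have habs : |q| ^ s ≤ |q| :=
      pow_le_of_le_one (abs_nonneg q) (abs_le.mpr ⟨h₁, by linarith⟩) hs.ne'
    rw [← abs_pow] at habs
    linarith [neg_abs_le (q ^ s), abs_of_nonpos h₀]

theorem abs_circCoeff_succ_le {q : ℝ} (hq : q ∈ Set.Ioc (-1 : ℝ) 0) (r : ℕ) :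
    |circCoeff q (r + 1)| ≤ |q| ^ r := by
  have hpos : 0 < 1 + q := by linarith [hq.1]
  have h₁ := self_le_pow_of_neg_one_le_of_nonpos hq.1.le hq.2 (r + 2)
  have h₂ := self_le_pow_of_neg_one_le_of_nonpos hq.1.le hq.2 r
  have hden : (1 + q) ^ 2 ≤ (1 + q ^ (r + 2)) * (1 + q ^ r) := by
    rw [sq]; exact mul_le_mul (by linarith) (by linarith) hpos.le (by linarith)
  have hden_pos : 0 < (1 + q ^ (r + 2)) * (1 + q ^ r) := lt_of_lt_of_le (by positivity) hden
  rw [circCoeff, Nat.add_sub_cancel, abs_div, abs_mul, abs_pow, abs_of_pos hden_pos,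
    abs_of_nonneg (sq_nonneg (1 + q)), div_le_iff₀ hden_pos]
  exact mul_le_mul_of_nonneg_left hden (by positivity)

/-- `F_q(t) = ∑_{r ≥ 0} circDensityCoeff q r * cos(2rt)`, the constant term included. -/
noncomputable def circDensityCoeff (q : ℝ) : ℕ → ℝ
  | 0 => 1
  | r + 1 => 2 * ((-1) ^ (r + 1) * circCoeff q (r + 1))

theorem summable_abs_circDensityCoeff {q : ℝ} (hq : q ∈ Set.Ioc (-1 : ℝ) 0) :
    Summable fun r => |circDensityCoeff q r| := by
  have habs : |q| < 1 := abs_lt.mpr ⟨hq.1, by linarith [hq.2]⟩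
  refine (summable_nat_add_iff 1).mp <|
    ((summable_geometric_of_lt_one (abs_nonneg q) habs).mul_left 2).of_nonneg_of_le
      (fun _ => abs_nonneg _) fun r => ?_
  simp only [circDensityCoeff, abs_mul, abs_pow, abs_neg, abs_one, one_pow, one_mul, abs_two]
  exact mul_le_mul_of_nonneg_left (abs_circCoeff_succ_le hq r) zero_le_two

theorem hasSum_circDensity {q : ℝ} (hq : q ∈ Set.Ioc (-1 : ℝ) 0) (t : ℝ) :
    HasSum (fun r : ℕ => circDensityCoeff q r * Real.cos (2 * r * t)) (circDensity q t) := by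
  have hsum : Summable fun r : ℕ => circDensityCoeff q r * Real.cos (2 * r * t) :=
    (summable_abs_circDensityCoeff hq).of_norm_bounded fun r => by
      simpa only [Real.norm_eq_abs, abs_mul] using
        mul_le_of_le_one_right (abs_nonneg _) (Real.abs_cos_le_one _)
  convert hsum.hasSum using 1
  rw [hsum.tsum_eq_zero_add, circDensity, ← tsum_mul_left]
  simp [circDensityCoeff, mul_assoc]

theorem hasSum_integral_circDensity_mul {q : ℝ} (hq : q ∈ Set.Ioc (-1 : ℝ) 0) {g : ℝ → ℝ}
    {C : ℝ} (hg : Continuous g) (hgC : ∀ t, |g t| ≤ C) (a b : ℝ) :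
    HasSum (fun r : ℕ => circDensityCoeff q r * ∫ t in a..b, Real.cos (2 * r * t) * g t)
      (∫ t in a..b, circDensity q t * g t) := by
  simp_rw [← intervalIntegral.integral_const_mul, ← mul_assoc]
  refine hasSum_intervalIntegral_of_norm_le (fun r => by fun_prop)
    ((summable_abs_circDensityCoeff hq).mul_right C) (fun r t => ?_)
    (fun t => (hasSum_circDensity hq t).mul_right (g t)) a b
  rw [Real.norm_eq_abs, abs_mul, abs_mul]
  exact mul_le_mul (mul_le_of_le_one_right (abs_nonneg _) (Real.abs_cos_le_one _)) (hgC t)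
    (abs_nonneg _) (abs_nonneg _)

theorem sum_range_circDensityCoeff_mul_choose (q : ℝ) (k : ℕ) :
    ∑ r ∈ range (k + 1), circDensityCoeff q r * (2 * k).choose (k - r) =
      ((2 * k).choose k : ℝ) +
        2 * ∑ r ∈ Icc 1 k, (-1 : ℝ) ^ r * ((2 * k).choose (k - r) : ℝ) * circCoeff q r := by
  rw [sum_range_succ', ← Ico_add_one_right_eq_Icc, sum_Ico_eq_sum_range, mul_sum, add_comm]
  simp only [circDensityCoeff, Nat.sub_zero, one_mul, Nat.add_sub_cancel]
  congr 1
  refine sum_congr rfl fun r _ => ?_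
  rw [add_comm 1 r]; ring

theorem stmt16 (q : ℝ) (hq : q ∈ Set.Ioo (-1 : ℝ) 0) (k : ℕ) :
    (1 / (2 * Real.pi)) * ∫ t in (0 : ℝ)..(2 * Real.pi),
        circDensity q t * (2 * Real.cos t) ^ (2 * k) =
      (Nat.choose (2 * k) k : ℝ) +
        2 * ∑ r ∈ Finset.Icc 1 k, (-1 : ℝ) ^ r * (Nat.choose (2 * k) (k - r) : ℝ) *
          circCoeff q r := by
  have hweight (t : ℝ) : |(2 * Real.cos t) ^ (2 * k)| ≤ 2 ^ (2 * k) := by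
    rw [abs_pow, abs_mul, abs_two]
    exact pow_le_pow_left₀ (by positivity) (by linarith [Real.abs_cos_le_one t]) _
  have hmoments := hasSum_integral_circDensity_mul (Set.Ioo_subset_Ioc_self hq)
    (by fun_prop) hweight 0 (2 * π)
  simp_rw [integral_cos_mul_two_cos_pow] at hmoments
  have hfinite := hmoments.unique <| hasSum_sum_of_ne_finset_zero (s := range (k + 1))
    fun r hr => by rw [if_neg (by simp only [mem_range] at hr; omega), mul_zero]
  rw [hfinite, ← sum_range_circDensityCoeff_mul_choose, mul_sum]
  refine sum_congr rfl fun r hr => ?_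
  rw [if_pos (Nat.lt_succ_iff.mp (mem_range.mp hr))]
  field_simp
end
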